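/- Let b > 0, σ > 0, and let ν be a measure on (0,∞) with ∫_0^∞ (z∧1) ν(dz) < ∞. Fix t > 0, and let μ be a probability measure on [0,∞) whose Laplace transform satisfies, for every real u ≤ 0, ∫ e^{uy} μ(dy) = exp(∫_0^t ∫_0^∞ (e^{zψ(s,u)} − 1) ν(dz) ds). Then for every δ > 0 one has μ([0,δ]) > 0. -/

import Mathlib

open MeasureTheory Filter Set
open scoped ENNReal

/-- `ψ(t,u) = u e^{−bt} / (1 − (σ²u/(2b))(1 − e^{−bt}))`. -/
noncomputable def psi (b σ t u : ℝ) : ℝ :=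
  u * Real.exp (-b * t) / (1 - σ ^ 2 * u / (2 * b) * (1 - Real.exp (-b * t)))

/-! If `μ` gave no mass to `[0, δ]`, its Laplace transform would be at most `e^{uδ}` for `u ≤ 0`,
so the exponent would tend to `-∞` at least linearly in `|u|`. But `-ψ(s, u)` is bounded both by
`|u|` and by a bound `psiLim b σ s` that does not depend on `u` and stays bounded for `s` away from
`0`. Together with `e^{-x} - 1 ≥ -(x ∧ 1)` and `C = ∫ (z ∧ 1) dν < ∞`, this bounds the exponent
below by `-(|u| s₀ C + t M(s₀))` for every `s₀ > 0`; taking `s₀ C ≤ δ / 2` and `|u|` large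
contradicts the linear decay. -/

open Real

/-- `-ψ(s, u)` increases to `psiLim b σ s` as `u → -∞`. -/
noncomputable def psiLim (b σ s : ℝ) : ℝ := 2 * b / σ ^ 2 / (exp (b * s) - 1)

section Psi

variable {b σ s u : ℝ}

lemma one_le_psi_denom (hb : 0 < b) (hs : 0 ≤ s) (hu : u ≤ 0) :
    1 ≤ 1 - σ ^ 2 * u / (2 * b) * (1 - exp (-b * s)) := by
  have hE : exp (-b * s) ≤ 1 := exp_le_one_iff.2 (by nlinarith)
  have : σ ^ 2 * u / (2 * b) ≤ 0 :=
    div_nonpos_of_nonpos_of_nonneg (mul_nonpos_of_nonneg_of_nonpos (sq_nonneg σ) hu) (by positivity)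
  nlinarith

lemma psi_nonpos (hb : 0 < b) (hs : 0 ≤ s) (hu : u ≤ 0) : psi b σ s u ≤ 0 :=
  div_nonpos_of_nonpos_of_nonneg (mul_nonpos_of_nonpos_of_nonneg hu (exp_pos _).le)
    (zero_le_one.trans (one_le_psi_denom hb hs hu))

lemma le_psi (hb : 0 < b) (hs : 0 ≤ s) (hu : u ≤ 0) : u ≤ psi b σ s u := by
  have hD := one_le_psi_denom (σ := σ) hb hs hu
  have hE : exp (-b * s) ≤ 1 := exp_le_one_iff.2 (by nlinarith)
  rw [psi, le_div_iff₀ (by linarith)]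
  nlinarith

lemma neg_psiLim_le_psi (hb : 0 < b) (hσ : σ ≠ 0) (hs : 0 < s) (hu : u ≤ 0) :
    -psiLim b σ s ≤ psi b σ s u := by
  have hD := one_le_psi_denom (σ := σ) hb hs.le hu
  have he : 0 < exp (b * s) - 1 := sub_pos.2 (one_lt_exp_iff.2 (mul_pos hb hs))
  have hinv : exp (-b * s) * exp (b * s) = 1 := by rw [← exp_add]; simp
  have hK : 2 * b / σ ^ 2 * (σ ^ 2 * u / (2 * b)) = u := by field_simp
  rw [psiLim, psi, neg_le, ← neg_div, div_le_div_iff₀ (by linarith) he]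
  have : 2 * b / σ ^ 2 * (1 - σ ^ 2 * u / (2 * b) * (1 - exp (-b * s))) =
      -(u * exp (-b * s)) * (exp (b * s) - 1) + 2 * b / σ ^ 2 := by
    linear_combination -(1 - exp (-b * s)) * hK + u * hinv
  have : 0 < 2 * b / σ ^ 2 := by positivity
  linarith

lemma psiLim_antitoneOn (hb : 0 < b) : AntitoneOn (psiLim b σ) (Ioi 0) := by
  intro s₁ hs₁ s₂ _ h
  have he : 0 < exp (b * s₁) - 1 := sub_pos.2 (one_lt_exp_iff.2 (mul_pos hb hs₁))
  unfold psiLim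
  gcongr

end Psi

lemma exp_mul_sub_one_ge {z c : ℝ} (hz : 0 ≤ z) :
    -(max (-c) 1 * min z 1) ≤ exp (z * c) - 1 := by
  have hexp : -min (z * -c) 1 ≤ exp (z * c) - 1 := by
    rcases le_total (z * -c) 1 with h | h
    · rw [min_eq_left h]; linarith [add_one_le_exp (z * c)]
    · rw [min_eq_right h]; linarith [exp_pos (z * c)]
  have hmin : min (z * -c) 1 ≤ max (-c) 1 * min z 1 := by
    rcases le_total z 1 with h | h
    · rw [min_eq_left h]
      exact (min_le_left _ _).trans (by nlinarith [le_max_left (-c) 1])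
    · rw [min_eq_right h, mul_one]
      exact (min_le_right _ _).trans (le_max_right _ _)
  linarith

lemma exp_mul_sub_one_nonpos {z c : ℝ} (hz : 0 ≤ z) (hc : c ≤ 0) : exp (z * c) - 1 ≤ 0 :=
  sub_nonpos.2 (exp_le_one_iff.2 (mul_nonpos_of_nonneg_of_nonpos hz hc))

section Integrals

variable {ν : Measure ℝ} {c : ℝ}

lemma setIntegral_min_one_nonneg : 0 ≤ ∫ z in Ioi 0, min z 1 ∂ν :=
  setIntegral_nonneg measurableSet_Ioi fun _ hz ↦ le_min (le_of_lt hz) zero_le_one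

lemma setIntegral_exp_mul_sub_one_nonpos (hc : c ≤ 0) :
    ∫ z in Ioi 0, (exp (z * c) - 1) ∂ν ≤ 0 :=
  setIntegral_nonpos measurableSet_Ioi fun _ hz ↦ exp_mul_sub_one_nonpos (le_of_lt hz) hc

lemma neg_setIntegral_exp_mul_sub_one_le (hint : IntegrableOn (fun z ↦ min z 1) (Ioi 0) ν)
    (hc : c ≤ 0) :
    -∫ z in Ioi 0, (exp (z * c) - 1) ∂ν ≤ max (-c) 1 * ∫ z in Ioi 0, min z 1 ∂ν := by
  rw [← integral_neg, ← integral_const_mul]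
  refine integral_mono_of_nonneg ?_ (hint.const_mul _) ?_ <;>
    filter_upwards [ae_restrict_mem measurableSet_Ioi] with z hz
  · exact neg_nonneg.2 (exp_mul_sub_one_nonpos (le_of_lt hz) hc)
  · linarith [exp_mul_sub_one_ge (c := c) (le_of_lt hz)]

end Integrals

lemma setIntegral_Ioc_le_of_le_of_le {f : ℝ → ℝ} {t s₀ A M : ℝ} (ht : 0 ≤ t) (hs₀ : 0 ≤ s₀)
    (hA : 0 ≤ A) (hM : 0 ≤ M) (hf : ∀ s ∈ Ioc 0 t, 0 ≤ f s) (hfA : ∀ s ∈ Ioc 0 t, f s ≤ A)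
    (hfM : ∀ s ∈ Ioc 0 t, s₀ < s → f s ≤ M) :
    ∫ s in Ioc 0 t, f s ≤ s₀ * A + t * M := by
  have hbound : ∀ s ∈ Ioc 0 t, f s ≤ (Iic s₀).indicator (fun _ ↦ A) s + M := by
    intro s hs
    by_cases h : s ≤ s₀
    · rw [indicator_of_mem (mem_Iic.2 h)]; linarith [hfA s hs]
    · rw [indicator_of_notMem (notMem_Iic.2 (not_le.1 h)), zero_add]; exact hfM s hs (not_le.1 h)
  calc ∫ s in Ioc 0 t, f s
      ≤ ∫ s in Ioc 0 t, ((Iic s₀).indicator (fun _ ↦ A) s + M) := by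
        refine integral_mono_of_nonneg ?_ ?_ ?_
        · exact (ae_restrict_mem measurableSet_Ioc).mono hf
        · exact ((integrable_const A).indicator measurableSet_Iic).add (integrable_const M)
        · exact (ae_restrict_mem measurableSet_Ioc).mono hbound
    _ = volume.real (Iic s₀ ∩ Ioc 0 t) * A + t * M := by
        rw [integral_add ((integrable_const A).indicator measurableSet_Iic) (integrable_const M),
          integral_indicator_const _ measurableSet_Iic, setIntegral_const,
          measureReal_restrict_apply measurableSet_Iic, Real.volume_real_Ioc_of_le ht]
        simp
    _ ≤ s₀ * A + t * M := by
        gcongr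
        calc volume.real (Iic s₀ ∩ Ioc 0 t) ≤ volume.real (Ioc 0 s₀) :=
              measureReal_mono (fun s hs ↦ ⟨hs.2.1, hs.1⟩) measure_Ioc_lt_top.ne
          _ = s₀ := by simp [Real.volume_real_Ioc_of_le hs₀]

lemma integral_exp_mul_le_of_measure_Iio_eq_zero {μ : Measure ℝ} [IsProbabilityMeasure μ]
    {δ u : ℝ} (hμ : μ (Iio δ) = 0) (hu : u ≤ 0) :
    ∫ y, exp (u * y) ∂μ ≤ exp (u * δ) := by
  have hδ : ∀ᵐ y ∂μ, δ ≤ y := by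
    rw [ae_iff]; exact measure_mono_null (fun y hy ↦ not_le.1 hy) hμ
  calc ∫ y, exp (u * y) ∂μ ≤ ∫ _, exp (u * δ) ∂μ :=
        integral_mono_of_nonneg (ae_of_all _ fun y ↦ (exp_pos _).le) (integrable_const _)
          (hδ.mono fun y hy ↦ exp_le_exp.2 (mul_le_mul_of_nonpos_left hy hu))
    _ = exp (u * δ) := by simp

noncomputable def laplaceExponent (b σ : ℝ) (ν : Measure ℝ) (t u : ℝ) : ℝ :=
  ∫ s in Ioc 0 t, ∫ z in Ioi 0, (exp (z * psi b σ s u) - 1) ∂ν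

section LaplaceExponent

variable {b σ t u : ℝ} {ν : Measure ℝ}

lemma neg_setIntegral_exp_mul_psi_sub_one_le (hb : 0 < b) (hσ : σ ≠ 0)
    (hint : IntegrableOn (fun z ↦ min z 1) (Ioi 0) ν) {s : ℝ} (hs : 0 < s) (hu : u ≤ 0) :
    -∫ z in Ioi 0, (exp (z * psi b σ s u) - 1) ∂ν ≤
      max (min (-u) (psiLim b σ s)) 1 * ∫ z in Ioi 0, min z 1 ∂ν := by
  have hneg_psi : -psi b σ s u ≤ min (-u) (psiLim b σ s) :=
    le_min (by linarith [le_psi (σ := σ) hb hs.le hu]) (by linarith [neg_psiLim_le_psi hb hσ hs hu])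
  refine (neg_setIntegral_exp_mul_sub_one_le hint (psi_nonpos hb hs.le hu)).trans ?_
  gcongr
  exact setIntegral_min_one_nonneg

lemma neg_le_laplaceExponent (hb : 0 < b) (hσ : σ ≠ 0)
    (hint : IntegrableOn (fun z ↦ min z 1) (Ioi 0) ν) (ht : 0 ≤ t) {s₀ : ℝ} (hs₀ : 0 < s₀)
    (hu : u ≤ -1) :
    -(s₀ * (-u * ∫ z in Ioi 0, min z 1 ∂ν) +
        t * (max (psiLim b σ s₀) 1 * ∫ z in Ioi 0, min z 1 ∂ν)) ≤
      laplaceExponent b σ ν t u := by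
  have hC := setIntegral_min_one_nonneg (ν := ν)
  have hbound : ∀ s ∈ Ioc 0 t, -∫ z in Ioi 0, (exp (z * psi b σ s u) - 1) ∂ν ≤
      max (min (-u) (psiLim b σ s)) 1 * ∫ z in Ioi 0, min z 1 ∂ν :=
    fun s hs ↦ neg_setIntegral_exp_mul_psi_sub_one_le hb hσ hint hs.1 (by linarith)
  rw [neg_le, laplaceExponent, ← integral_neg]
  refine setIntegral_Ioc_le_of_le_of_le ht hs₀.le (by nlinarith) (by positivity) ?_ ?_ ?_
  · exact fun s hs ↦
      neg_nonneg.2 (setIntegral_exp_mul_sub_one_nonpos (psi_nonpos hb hs.1.le (by linarith)))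
  · refine fun s hs ↦ (hbound s hs).trans ?_
    gcongr
    exact max_le (min_le_left _ _) (by linarith)
  · refine fun s hs hs₀s ↦ (hbound s hs).trans ?_
    gcongr
    exact (min_le_right _ _).trans (psiLim_antitoneOn hb hs₀ hs.1 hs₀s.le)

end LaplaceExponent

theorem Z_t_mass_near_zero_general (b σ t : ℝ) (hb : 0 < b) (hσ : 0 < σ) (ht : 0 < t)
    (ν : Measure ℝ)
    (hν : ∫⁻ z in Set.Ioi (0 : ℝ), ENNReal.ofReal (min z 1) ∂ν < ⊤)
    (μ : Measure ℝ) (hμ : IsProbabilityMeasure μ) (hμsupp : μ (Set.Iio 0) = 0)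
    (hLap : ∀ u : ℝ, u ≤ 0 →
      ∫ y, Real.exp (u * y) ∂μ =
        Real.exp (∫ s in Set.Ioc (0 : ℝ) t,
          ∫ z in Set.Ioi (0 : ℝ), (Real.exp (z * psi b σ s u) - 1) ∂ν)) :
    ∀ δ : ℝ, 0 < δ → 0 < μ (Set.Icc 0 δ) := by
  intro δ hδ
  have hint : IntegrableOn (fun z ↦ min z 1) (Ioi 0) ν :=
    ⟨by fun_prop, (hasFiniteIntegral_iff_ofReal <| (ae_restrict_mem measurableSet_Ioi).mono
      fun z hz ↦ le_min (le_of_lt hz) zero_le_one).2 hν⟩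
  set C := ∫ z in Ioi 0, min z 1 ∂ν
  have hC : 0 ≤ C := setIntegral_min_one_nonneg
  set s₀ := δ / (2 * (C + 1))
  set M := max (psiLim b σ s₀) 1 * C
  set u := -(1 + 2 * t * M / δ)
  have hs₀ : 0 < s₀ := by positivity
  have hCs₀ : C * s₀ ≤ δ / 2 := by
    rw [mul_div_assoc', div_le_div_iff₀ (by positivity) two_pos]; nlinarith
  have hu : u ≤ -1 := by linarith [show 0 ≤ 2 * t * M / δ by positivity]
  by_contra hzero
  have hIio : μ (Iio δ) = 0 :=
    measure_mono_null (Iio_subset_Iic_self.trans (Iio_union_Icc_eq_Iic hδ.le).superset)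
      (measure_union_null hμsupp (nonpos_iff_eq_zero.1 (not_lt.1 hzero)))
  have hupper : laplaceExponent b σ ν t u ≤ u * δ :=
    exp_le_exp.1 ((hLap u (by linarith)).symm.trans_le
      (integral_exp_mul_le_of_measure_Iio_eq_zero hIio (by linarith)))
  have hlower := neg_le_laplaceExponent hb hσ.ne' hint ht.le hs₀ hu
  have huδ : u * δ = -δ - 2 * t * M := by simp only [u]; field_simp; ring
  nlinarith [mul_le_mul_of_nonpos_left hCs₀ (by linarith : u ≤ 0)]

theorem Z_t_mass_near_zero (b σ t : ℝ) (hb : 0 < b) (hσ : 0 < σ) (ht : 0 < t)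
    (ν : Measure ℝ) (hνsupp : ν (Set.Iic 0) = 0)
    (hν : ∫⁻ z in Set.Ioi (0 : ℝ), ENNReal.ofReal (min z 1) ∂ν < ⊤)
    (μ : Measure ℝ) (hμ : IsProbabilityMeasure μ) (hμsupp : μ (Set.Iio 0) = 0)
    (hLap : ∀ u : ℝ, u ≤ 0 →
      ∫ y, Real.exp (u * y) ∂μ =
        Real.exp (∫ s in Set.Ioc (0 : ℝ) t,
          ∫ z in Set.Ioi (0 : ℝ), (Real.exp (z * psi b σ s u) - 1) ∂ν)) :
    ∀ δ : ℝ, 0 < δ → 0 < μ (Set.Icc 0 δ) :=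
  Z_t_mass_near_zero_general b σ t hb hσ ht ν hν μ hμ hμsupp hLap
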